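/- Quantitative lower bound on the stretching factor (Proposition 4.4): Let (ω, ρ) be a classical solution of the z-model on [0,T) with flow map Φ and with the initial data described in the context, and assume moreover L₂ ≥ L₁ + γ₁. Let τ' ∈ (0,T) and suppose that for all t ∈ [0,τ'] and all z ≥ L₁: 2ω(Φ(z,t)−γ₁, t) − ω(Φ(z,t)+γ₂, t) ≥ 0. Then for all z ∈ [L₂, L₃] and all t ∈ [0,τ']: 2ω(Φ(z,t)−γ₁, t) − ω(Φ(z,t)+γ₂, t) ≥ (2e^{−γ₁−γ₂} − 1)·∫₀ᵗ e^{Φ(z,s)} ds. -/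

import Mathlib

open MeasureTheory

lemma material_deriv {T : ℝ} (G : ℝ → ℝ → ℝ)
    (hG : ContDiffOn ℝ 1 (fun p : ℝ × ℝ => G p.1 p.2) (Set.univ ×ˢ Set.Ico 0 T))
    {φ : ℝ → ℝ} {t v : ℝ} (ht : t ∈ Set.Ico (0:ℝ) T)
    (hφ : HasDerivWithinAt φ v (Set.Ico 0 T) t) :
    HasDerivWithinAt (fun s => G (φ s) s)
      (derivWithin (fun s => G (φ t) s) (Set.Ico 0 T) t
        + v * deriv (fun y => G y t) (φ t)) (Set.Ico 0 T) t := by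
  set S : Set (ℝ × ℝ) := Set.univ ×ˢ Set.Ico 0 T with hS
  have hmem : ((φ t, t) : ℝ × ℝ) ∈ S := ⟨Set.mem_univ _, ht⟩
  have hd : DifferentiableWithinAt ℝ (fun p : ℝ × ℝ => G p.1 p.2) S (φ t, t) :=
    (hG.differentiableOn one_ne_zero) _ hmem
  set L := fderivWithin ℝ (fun p : ℝ × ℝ => G p.1 p.2) S (φ t, t) with hLdef
  have hLd : HasFDerivWithinAt (fun p : ℝ × ℝ => G p.1 p.2) L S (φ t, t) := hd.hasFDerivWithinAt
  have hy : HasDerivAt (fun y => G y t) (L (1, 0)) (φ t) := by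
    have hin : HasDerivWithinAt (fun y : ℝ => ((y, t) : ℝ × ℝ)) ((1:ℝ), (0:ℝ)) Set.univ (φ t) :=
      ((hasDerivAt_id (φ t)).prodMk (hasDerivAt_const _ t)).hasDerivWithinAt
    have h := hLd.comp_hasDerivWithinAt (f := fun y : ℝ => ((y, t) : ℝ × ℝ)) (φ t) hin (fun y _ => ⟨Set.mem_univ _, ht⟩)
    rw [hasDerivWithinAt_univ] at h
    exact h
  have hts : HasDerivWithinAt (fun s => G (φ t) s) (L (0, 1)) (Set.Ico 0 T) t := by
    have hin : HasDerivWithinAt (fun s : ℝ => ((φ t, s) : ℝ × ℝ)) ((0:ℝ), (1:ℝ)) (Set.Ico 0 T) t :=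
      (hasDerivWithinAt_const t _ (φ t)).prodMk (hasDerivWithinAt_id t _)
    have h := hLd.comp_hasDerivWithinAt t hin (fun s hs => ⟨Set.mem_univ _, hs⟩)
    exact h
  have hcomp : HasDerivWithinAt (fun s => G (φ s) s) (L (v, 1)) (Set.Ico 0 T) t := by
    have hin : HasDerivWithinAt (fun s : ℝ => ((φ s, s) : ℝ × ℝ)) ((v:ℝ), (1:ℝ)) (Set.Ico 0 T) t :=
      hφ.prodMk (hasDerivWithinAt_id t _)
    have h := HasFDerivWithinAt.comp_hasDerivWithinAt (f := fun s : ℝ => ((φ s, s) : ℝ × ℝ)) t hLd hin (fun s hs => ⟨Set.mem_univ _, hs⟩)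
    exact h
  have hdw : derivWithin (fun s => G (φ t) s) (Set.Ico 0 T) t = L (0,1) :=
    hts.derivWithin (uniqueDiffOn_Ico 0 T t ht)
  have hde : deriv (fun y => G y t) (φ t) = L (1,0) := hy.deriv
  rw [hdw, hde]
  have hv : ((v, 1) : ℝ × ℝ) = (0,1) + v • (1,0) := by simp
  convert hcomp using 1
  rw [hv, map_add, L.map_smul, smul_eq_mul]


/-- The Biot–Savart velocity of the model in the variable `z = −log x`:
`u(z,t) = ∫₀^{z−γ₁} ω(y,t) dy − ∫_{z−γ₁}^{z+γ₂} ω(y,t) dy`. -/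
noncomputable def velZ (γ₁ γ₂ : ℝ) (ω : ℝ → ℝ → ℝ) (z t : ℝ) : ℝ :=
  (∫ y in (0:ℝ)..(z - γ₁), ω y t) - ∫ y in (z - γ₁)..(z + γ₂), ω y t

/-- A classical solution of the z-model on `ℝ × [0,T)`, together with its flow map `Φ`. -/
structure IsClassicalSolutionZ (γ₁ γ₂ T : ℝ) (ω ρ Φ : ℝ → ℝ → ℝ) : Prop where
  Tpos : 0 < T
  omega_smooth : ContDiffOn ℝ 1 (fun p : ℝ × ℝ => ω p.1 p.2) (Set.univ ×ˢ Set.Ico 0 T)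
  rho_smooth : ContDiffOn ℝ 1 (fun p : ℝ × ℝ => ρ p.1 p.2) (Set.univ ×ˢ Set.Ico 0 T)
  omega_nonneg : ∀ z t, 0 ≤ ω z t
  rho_nonneg : ∀ z t, 0 ≤ ρ z t
  supp : ∀ t, 0 ≤ t → t < T → ∃ a b : ℝ, 0 < a ∧ a ≤ b ∧
      ∀ z, z ∉ Set.Icc a b → ω z t = 0 ∧ ρ z t = 0
  omega_eq : ∀ z : ℝ, ∀ t, 0 ≤ t → t < T →
      derivWithin (fun s => ω z s) (Set.Ico 0 T) t
        + velZ γ₁ γ₂ ω z t * deriv (fun y => ω y t) z = ρ z t * Real.exp z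
  rho_eq : ∀ z : ℝ, ∀ t, 0 ≤ t → t < T →
      derivWithin (fun s => ρ z s) (Set.Ico 0 T) t
        + velZ γ₁ γ₂ ω z t * deriv (fun y => ρ y t) z = 0
  flow_init : ∀ z : ℝ, Φ z 0 = z
  flow_deriv : ∀ z : ℝ, ∀ t, 0 ≤ t → t < T →
      HasDerivWithinAt (fun s => Φ z s) (velZ γ₁ γ₂ ω (Φ z t) t) (Set.Ico 0 T) t
  flow_mono : ∀ t, 0 ≤ t → t < T → StrictMono (fun z => Φ z t)
  flow_bij : ∀ t, 0 ≤ t → t < T → Function.Bijective (fun z => Φ z t)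

/-- **Quantitative lower bound on the stretching factor (Proposition 4.4).** With the chosen
data and `L₂ ≥ L₁ + γ₁`, if `2ω(Φ(z,t)−γ₁,t) − ω(Φ(z,t)+γ₂,t) ≥ 0` for `t ∈ [0,τ']` and
`z ≥ L₁`, then for `z ∈ [L₂,L₃]` and `t ∈ [0,τ']`:
`2ω(Φ(z,t)−γ₁,t) − ω(Φ(z,t)+γ₂,t) ≥ (2e^{−γ₁−γ₂} − 1)·∫₀ᵗ e^{Φ(z,s)} ds`. -/
theorem quantitative_stretching_bound (γ₁ γ₂ ε L₀ L₁ L₂ L₃ L₄ T : ℝ)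
    (hγ₁ : 0 ≤ γ₁) (hγ₂ : 0 ≤ γ₂)
    (hsign : 0 < 2 * Real.exp (-γ₁) - Real.exp γ₂)
    (hε : 0 < ε) (hεcond : 1 < 2 * Real.exp (-γ₁ - γ₂ - ε))
    (hL0 : 1 < L₀) (hL01 : L₀ < L₁) (hL12 : L₁ < L₂) (hL23 : L₂ < L₃) (hL34 : L₃ < L₄)
    (hL0q : L₀ ≤ L₁ / 4) (hγ₁L : γ₁ < L₁ / 4) (hγ₂L : γ₂ < L₁ / 4) (hεL : ε < L₁ / 10)
    (ω ρ Φ : ℝ → ℝ → ℝ) (hsol : IsClassicalSolutionZ γ₁ γ₂ T ω ρ Φ)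
    (hω0 : ∀ z, ω z 0 = 0)
    (hρ0smooth : ContDiff ℝ (⊤ : ℕ∞) (fun z => ρ z 0))
    (hρ0bdd : ∀ z, 0 ≤ ρ z 0 ∧ ρ z 0 ≤ 1)
    (hρ0supp : ∀ z, z ∉ Set.Icc (1:ℝ) L₄ → ρ z 0 = 0)
    (hρ0one : ∀ z ∈ Set.Icc L₀ L₃, ρ z 0 = 1)
    (hρ0mono : AntitoneOn (fun z => ρ z 0) (Set.Ici L₃))
    (hL₂ : L₁ + γ₁ ≤ L₂) (τ' : ℝ) (hτ'pos : 0 < τ') (hτ'T : τ' < T)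
    (hpos : ∀ t, 0 ≤ t → t ≤ τ' → ∀ z, L₁ ≤ z →
      0 ≤ 2 * ω (Φ z t - γ₁) t - ω (Φ z t + γ₂) t) :
    ∀ z ∈ Set.Icc L₂ L₃, ∀ t, 0 ≤ t → t ≤ τ' →
      (2 * Real.exp (-γ₁ - γ₂) - 1) * ∫ s in (0:ℝ)..t, Real.exp (Φ z s)
        ≤ 2 * ω (Φ z t - γ₁) t - ω (Φ z t + γ₂) t := by
  intro z hz t ht0 htτ
  obtain ⟨hzL₂, hzL₃⟩ := hz
  have hT := hsol.Tpos
  have htT : t < T := lt_of_le_of_lt htτ hτ'T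
  have hIccIco : Set.Icc (0:ℝ) t ⊆ Set.Ico 0 T :=
    fun s hs => ⟨hs.1, lt_of_le_of_lt (hs.2.trans htτ) hτ'T⟩
  have hIccIco' : Set.Icc (0:ℝ) τ' ⊆ Set.Ico 0 T :=
    fun s hs => ⟨hs.1, lt_of_le_of_lt hs.2 hτ'T⟩
  -- continuity of the flow in time
  have flowCont : ∀ w : ℝ, ContinuousOn (fun s => Φ w s) (Set.Ico 0 T) := fun w s hs =>
    ((hsol.flow_deriv w s hs.1 hs.2).differentiableWithinAt).continuousWithinAt
  -- comparison of velocities at flow images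
  have velCompare : ∀ s, 0 ≤ s → s ≤ τ' → ∀ w zz : ℝ, L₁ ≤ w → w ≤ zz →
      velZ γ₁ γ₂ ω (Φ w s) s ≤ velZ γ₁ γ₂ ω (Φ zz s) s := by
    intro s hs0 hsτ w zz hw hwzz
    have hsT : s < T := lt_of_le_of_lt hsτ hτ'T
    have hmono := hsol.flow_mono s hs0 hsT
    have hab : Φ w s ≤ Φ zz s := hmono.le_iff_le.mpr hwzz
    set a := Φ w s with ha
    set b := Φ zz s with hb
    have hωc : Continuous (fun y => ω y s) := by
      have h := hsol.omega_smooth.continuousOn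
      exact h.comp_continuous (continuous_id.prodMk continuous_const)
        (fun y => ⟨Set.mem_univ _, hs0, hsT⟩)
    have hInt : ∀ c d : ℝ, IntervalIntegrable (fun y => ω y s) volume c d :=
      fun c d => hωc.intervalIntegrable c d
    have hvel : ∀ x : ℝ, velZ γ₁ γ₂ ω x s =
        2 * (∫ y in (0:ℝ)..(x - γ₁), ω y s) - ∫ y in (0:ℝ)..(x + γ₂), ω y s := by
      intro x
      have h1 : (∫ y in (0:ℝ)..(x + γ₂), ω y s) - (∫ y in (0:ℝ)..(x - γ₁), ω y s)
          = ∫ y in (x - γ₁)..(x + γ₂), ω y s :=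
        intervalIntegral.integral_interval_sub_left (hInt 0 (x+γ₂)) (hInt 0 (x-γ₁))
      rw [velZ, ← h1]; ring
    have hI1 : Continuous (fun y => ω (y - γ₁) s) :=
      hωc.comp (continuous_sub_right γ₁)
    have hI2 : Continuous (fun y => ω (y + γ₂) s) :=
      hωc.comp (continuous_add_right γ₂)
    have key : velZ γ₁ γ₂ ω b s - velZ γ₁ γ₂ ω a s
        = ∫ y in a..b, (2 * ω (y - γ₁) s - ω (y + γ₂) s) := by
      have h2 : (∫ y in (0:ℝ)..(b - γ₁), ω y s) - (∫ y in (0:ℝ)..(a - γ₁), ω y s)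
          = ∫ y in (a - γ₁)..(b - γ₁), ω y s :=
        intervalIntegral.integral_interval_sub_left (hInt _ _) (hInt _ _)
      have h3 : (∫ y in (0:ℝ)..(b + γ₂), ω y s) - (∫ y in (0:ℝ)..(a + γ₂), ω y s)
          = ∫ y in (a + γ₂)..(b + γ₂), ω y s :=
        intervalIntegral.integral_interval_sub_left (hInt _ _) (hInt _ _)
      have h4 : (∫ y in a..b, ω (y - γ₁) s) = ∫ y in (a - γ₁)..(b - γ₁), ω y s :=
        intervalIntegral.integral_comp_sub_right (fun y => ω y s) γ₁
      have h5 : (∫ y in a..b, ω (y + γ₂) s) = ∫ y in (a + γ₂)..(b + γ₂), ω y s :=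
        intervalIntegral.integral_comp_add_right (fun y => ω y s) γ₂
      have h6 : (∫ y in a..b, (2 * ω (y - γ₁) s - ω (y + γ₂) s))
          = 2 * (∫ y in a..b, ω (y - γ₁) s) - ∫ y in a..b, ω (y + γ₂) s := by
        rw [intervalIntegral.integral_sub ((hI1.intervalIntegrable a b).const_mul 2)
          (hI2.intervalIntegrable a b), intervalIntegral.integral_const_mul]
      rw [hvel a, hvel b, h6, h4, h5, ← h2, ← h3]; ring
    have hnn : 0 ≤ ∫ y in a..b, (2 * ω (y - γ₁) s - ω (y + γ₂) s) := by
      apply intervalIntegral.integral_nonneg hab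
      intro y hy
      obtain ⟨ζ, hζ⟩ := (hsol.flow_bij s hs0 hsT).2 y
      have hζ' : Φ ζ s = y := hζ
      have hwζ : w ≤ ζ := hmono.le_iff_le.mp (by rw [hζ']; exact hy.1)
      have := hpos s hs0 hsτ ζ (hw.trans hwζ)
      rwa [hζ'] at this
    linarith
  -- monotonicity of gaps between flow trajectories
  have gapMono : ∀ w zz : ℝ, L₁ ≤ w → w ≤ zz →
      MonotoneOn (fun s => Φ zz s - Φ w s) (Set.Icc 0 τ') := by
    intro w zz hw hwzz
    apply monotoneOn_of_deriv_nonneg (convex_Icc 0 τ')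
    · exact ((flowCont zz).mono hIccIco').sub ((flowCont w).mono hIccIco')
    · intro x hx
      rw [interior_Icc] at hx
      have hnb : Set.Ico (0:ℝ) T ∈ nhds x := Ico_mem_nhds hx.1 (lt_trans hx.2 hτ'T)
      have hz' := (hsol.flow_deriv zz x (le_of_lt hx.1) (lt_trans hx.2 hτ'T)).hasDerivAt hnb
      have hw' := (hsol.flow_deriv w x (le_of_lt hx.1) (lt_trans hx.2 hτ'T)).hasDerivAt hnb
      exact (hz'.sub hw').differentiableAt.differentiableWithinAt
    · intro x hx
      rw [interior_Icc] at hx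
      have hnb : Set.Ico (0:ℝ) T ∈ nhds x := Ico_mem_nhds hx.1 (lt_trans hx.2 hτ'T)
      have hz' := (hsol.flow_deriv zz x (le_of_lt hx.1) (lt_trans hx.2 hτ'T)).hasDerivAt hnb
      have hw' := (hsol.flow_deriv w x (le_of_lt hx.1) (lt_trans hx.2 hτ'T)).hasDerivAt hnb
      rw [show (fun s => Φ zz s - Φ w s) = ((fun s => Φ zz s) - fun s => Φ w s) from rfl, (hz'.sub hw').deriv]
      exact sub_nonneg.mpr (velCompare x (le_of_lt hx.1) (le_of_lt hx.2) w zz hw hwzz)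
  -- transport of ρ along the flow
  have rhoTrans : ∀ w : ℝ, ∀ s, 0 ≤ s → s ≤ τ' → ρ (Φ w s) s = ρ w 0 := by
    intro w s hs0 hsτ
    have hsub : Set.Icc (0:ℝ) s ⊆ Set.Ico 0 T :=
      fun r hr => ⟨hr.1, lt_of_le_of_lt (hr.2.trans hsτ) hτ'T⟩
    have key : ∀ x ∈ Set.Icc (0:ℝ) s, HasDerivWithinAt (fun r => ρ (Φ w r) r) 0 (Set.Icc 0 s) x := by
      intro x hx
      have hxI : x ∈ Set.Ico (0:ℝ) T := hsub hx
      have h := material_deriv ρ hsol.rho_smooth hxI (hsol.flow_deriv w x hxI.1 hxI.2)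
      have h0 : derivWithin (fun r => ρ (Φ w x) r) (Set.Ico 0 T) x
          + velZ γ₁ γ₂ ω (Φ w x) x * deriv (fun y => ρ y x) (Φ w x) = 0 :=
        hsol.rho_eq (Φ w x) x hxI.1 hxI.2
      rw [h0] at h
      exact h.mono hsub
    have hmv := Convex.norm_image_sub_le_of_norm_hasDerivWithin_le
      (f' := fun _ => (0:ℝ)) (C := 0) key (fun x _ => by simp) (convex_Icc 0 s)
      (Set.left_mem_Icc.mpr hs0) (Set.right_mem_Icc.mpr hs0)
    simp only [zero_mul, norm_le_zero_iff, sub_eq_zero] at hmv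
    rw [hmv, hsol.flow_init]
  -- Duhamel formula for ω along the flow
  have omegaForm : ∀ w : ℝ, ∀ s, 0 ≤ s → s ≤ τ' →
      ω (Φ w s) s = ρ w 0 * ∫ r in (0:ℝ)..s, Real.exp (Φ w r) := by
    intro w s hs0 hsτ
    have hsub : Set.Icc (0:ℝ) s ⊆ Set.Ico 0 T :=
      fun r hr => ⟨hr.1, lt_of_le_of_lt (hr.2.trans hsτ) hτ'T⟩
    set g : ℝ → ℝ := fun r => Real.exp (Φ w (max 0 (min r τ'))) with hgdef
    have hmaps : ∀ r : ℝ, max 0 (min r τ') ∈ Set.Ico (0:ℝ) T := fun r =>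
      ⟨le_max_left _ _, lt_of_le_of_lt (max_le (le_of_lt hτ'pos) (min_le_right _ _)) hτ'T⟩
    have hgc : Continuous g := by
      have hclamp : Continuous fun r : ℝ => max 0 (min r τ') :=
        continuous_const.max (continuous_id.min continuous_const)
      have h1 : Continuous ((fun s => Φ w s) ∘ (fun r : ℝ => max 0 (min r τ'))) :=
        (flowCont w).comp_continuous hclamp hmaps
      exact Real.continuous_exp.comp h1
    have hgeq : ∀ r ∈ Set.Icc (0:ℝ) s, g r = Real.exp (Φ w r) := by
      intro r hr
      have h1 : min r τ' = r := min_eq_left (hr.2.trans hsτ)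
      have h2 : max 0 r = r := max_eq_right hr.1
      simp only [hgdef, h1, h2]
    have key : ∀ x ∈ Set.Icc (0:ℝ) s,
        HasDerivWithinAt (fun r => ω (Φ w r) r - ρ w 0 * ∫ u in (0:ℝ)..r, g u) 0 (Set.Icc 0 s) x := by
      intro x hx
      have hxI : x ∈ Set.Ico (0:ℝ) T := hsub hx
      have h := material_deriv ω hsol.omega_smooth hxI (hsol.flow_deriv w x hxI.1 hxI.2)
      have h0 : derivWithin (fun r => ω (Φ w x) r) (Set.Ico 0 T) x
          + velZ γ₁ γ₂ ω (Φ w x) x * deriv (fun y => ω y x) (Φ w x)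
          = ρ (Φ w x) x * Real.exp (Φ w x) :=
        hsol.omega_eq (Φ w x) x hxI.1 hxI.2
      rw [h0, rhoTrans w x hx.1 (hx.2.trans hsτ)] at h
      have h2 : HasDerivAt (fun r => ∫ u in (0:ℝ)..r, g u) (g x) x :=
        intervalIntegral.integral_hasDerivAt_right (hgc.intervalIntegrable 0 x)
          (hgc.stronglyMeasurableAtFilter volume (nhds x)) hgc.continuousAt
      have h3 : HasDerivWithinAt (fun r => ρ w 0 * ∫ u in (0:ℝ)..r, g u) (ρ w 0 * g x)
          (Set.Icc 0 s) x := (h2.const_mul (ρ w 0)).hasDerivWithinAt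
      have h4 := (h.mono hsub).sub h3
      have h5 : ρ w 0 * Real.exp (Φ w x) - ρ w 0 * g x = 0 := by
        rw [hgeq x hx]; ring
      rwa [h5] at h4
    have hmv := Convex.norm_image_sub_le_of_norm_hasDerivWithin_le
      (f' := fun _ => (0:ℝ)) (C := 0) key (fun x _ => by simp) (convex_Icc 0 s)
      (Set.left_mem_Icc.mpr hs0) (Set.right_mem_Icc.mpr hs0)
    simp only [zero_mul, norm_le_zero_iff, sub_eq_zero] at hmv
    have h6 : (∫ u in (0:ℝ)..s, g u) = ∫ u in (0:ℝ)..s, Real.exp (Φ w u) := by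
      apply intervalIntegral.integral_congr
      rw [Set.uIcc_of_le hs0]
      exact hgeq
    have h7 : ω (Φ w 0) 0 - ρ w 0 * ∫ u in (0:ℝ)..(0:ℝ), g u = 0 := by
      rw [hsol.flow_init, hω0, intervalIntegral.integral_same]; ring
    rw [h7] at hmv
    rw [← h6]
    linarith [hmv]
  -- the two pulled-back points
  have hmono := hsol.flow_mono t ht0 htT
  obtain ⟨w₁, hw₁0⟩ := (hsol.flow_bij t ht0 htT).2 (Φ z t - γ₁)
  obtain ⟨w₂, hw₂0⟩ := (hsol.flow_bij t ht0 htT).2 (Φ z t + γ₂)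
  have hw₁ : Φ w₁ t = Φ z t - γ₁ := hw₁0
  have hw₂ : Φ w₂ t = Φ z t + γ₂ := hw₂0
  have hzL₁ : L₁ ≤ z := le_trans (le_of_lt hL12) hzL₂
  have hzγL₁ : L₁ ≤ z - γ₁ := by linarith
  have hw₁z : w₁ ≤ z := hmono.le_iff_le.mp (by rw [hw₁]; linarith)
  have hmemτt : t ∈ Set.Icc (0:ℝ) τ' := ⟨ht0, htτ⟩
  have hmemτ0 : (0:ℝ) ∈ Set.Icc (0:ℝ) τ' := Set.left_mem_Icc.mpr (le_of_lt hτ'pos)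
  have h1 : γ₁ ≤ Φ z t - Φ (z - γ₁) t := by
    have h := gapMono (z - γ₁) z hzγL₁ (by linarith) hmemτ0 hmemτt ht0
    simpa [hsol.flow_init] using h
  have hw₁ge : z - γ₁ ≤ w₁ := hmono.le_iff_le.mp (by rw [hw₁]; linarith)
  have hw₁L₁ : L₁ ≤ w₁ := le_trans hzγL₁ hw₁ge
  have hΦw₁ : ∀ s ∈ Set.Icc (0:ℝ) t, Φ z s - γ₁ ≤ Φ w₁ s := by
    intro s hs
    have h := gapMono w₁ z hw₁L₁ hw₁z ⟨hs.1, hs.2.trans htτ⟩ hmemτt hs.2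
    have hft : Φ z t - Φ w₁ t = γ₁ := by rw [hw₁]; ring
    simp only [hft] at h
    linarith
  have hzw₂ : z ≤ w₂ := hmono.le_iff_le.mp (by rw [hw₂]; linarith)
  have hΦw₂ : ∀ s ∈ Set.Icc (0:ℝ) t, Φ w₂ s ≤ Φ z s + γ₂ := by
    intro s hs
    have h := gapMono z w₂ hzL₁ hzw₂ ⟨hs.1, hs.2.trans htτ⟩ hmemτt hs.2
    have hft : Φ w₂ t - Φ z t = γ₂ := by rw [hw₂]; ring
    simp only [hft] at h
    linarith
  have hρ₁ : ρ w₁ 0 = 1 := hρ0one w₁ ⟨by linarith, le_trans hw₁z hzL₃⟩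
  have e₁ : ω (Φ z t - γ₁) t = ∫ s in (0:ℝ)..t, Real.exp (Φ w₁ s) := by
    rw [← hw₁, omegaForm w₁ t ht0 htτ, hρ₁, one_mul]
  have e₂ : ω (Φ z t + γ₂) t = ρ w₂ 0 * ∫ s in (0:ℝ)..t, Real.exp (Φ w₂ s) := by
    rw [← hw₂, omegaForm w₂ t ht0 htτ]
  have hIg : ∀ w : ℝ, IntervalIntegrable (fun s => Real.exp (Φ w s)) volume 0 t := by
    intro w
    apply ContinuousOn.intervalIntegrable
    rw [Set.uIcc_of_le ht0]
    exact Real.continuous_exp.comp_continuousOn ((flowCont w).mono hIccIco)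
  have c₁ : Real.exp (-γ₁) * (∫ s in (0:ℝ)..t, Real.exp (Φ z s))
      ≤ ∫ s in (0:ℝ)..t, Real.exp (Φ w₁ s) := by
    rw [← intervalIntegral.integral_const_mul]
    apply intervalIntegral.integral_mono_on ht0 ((hIg z).const_mul _) (hIg w₁)
    intro s hs
    have h := hΦw₁ s hs
    have h2 : Real.exp (-γ₁) * Real.exp (Φ z s) = Real.exp (Φ z s - γ₁) := by
      rw [← Real.exp_add]; ring_nf
    rw [h2]
    exact Real.exp_le_exp.mpr h
  have hnn2 : 0 ≤ ∫ s in (0:ℝ)..t, Real.exp (Φ w₂ s) :=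
    intervalIntegral.integral_nonneg ht0 (fun s _ => (Real.exp_pos _).le)
  have c₂ : ρ w₂ 0 * (∫ s in (0:ℝ)..t, Real.exp (Φ w₂ s))
      ≤ Real.exp γ₂ * ∫ s in (0:ℝ)..t, Real.exp (Φ z s) := by
    have step1 : ρ w₂ 0 * (∫ s in (0:ℝ)..t, Real.exp (Φ w₂ s))
        ≤ ∫ s in (0:ℝ)..t, Real.exp (Φ w₂ s) := by
      nlinarith [(hρ0bdd w₂).2, hnn2]
    have step2 : (∫ s in (0:ℝ)..t, Real.exp (Φ w₂ s))
        ≤ ∫ s in (0:ℝ)..t, Real.exp γ₂ * Real.exp (Φ z s) := by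
      apply intervalIntegral.integral_mono_on ht0 (hIg w₂) ((hIg z).const_mul _)
      intro s hs
      have h := hΦw₂ s hs
      have h2 : Real.exp γ₂ * Real.exp (Φ z s) = Real.exp (Φ z s + γ₂) := by
        rw [← Real.exp_add]; ring_nf
      rw [h2]
      exact Real.exp_le_exp.mpr h
    rw [intervalIntegral.integral_const_mul] at step2
    linarith
  have hInn : 0 ≤ ∫ s in (0:ℝ)..t, Real.exp (Φ z s) :=
    intervalIntegral.integral_nonneg ht0 (fun s _ => (Real.exp_pos _).le)
  have coeff : (2 * Real.exp (-γ₁ - γ₂) - 1) ≤ 2 * Real.exp (-γ₁) - Real.exp γ₂ := by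
    have ha : Real.exp (-γ₁ - γ₂) = Real.exp (-γ₂) * Real.exp (-γ₁) := by
      rw [← Real.exp_add]; ring_nf
    have hb : Real.exp (-γ₂) * Real.exp γ₂ = 1 := by
      rw [← Real.exp_add]; simp
    have h1 : Real.exp (-γ₂) ≤ 1 := Real.exp_le_one_iff.mpr (by linarith)
    have h2 := mul_le_mul_of_nonneg_right h1 (le_of_lt hsign)
    have h3 : Real.exp (-γ₂) * (2 * Real.exp (-γ₁) - Real.exp γ₂)
        = 2 * Real.exp (-γ₁ - γ₂) - 1 := by
      linear_combination (-2:ℝ) * ha - hb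
    rw [h3, one_mul] at h2
    exact h2
  have expand : (2 * Real.exp (-γ₁) - Real.exp γ₂) * (∫ s in (0:ℝ)..t, Real.exp (Φ z s))
      = 2 * (Real.exp (-γ₁) * (∫ s in (0:ℝ)..t, Real.exp (Φ z s)))
        - Real.exp γ₂ * (∫ s in (0:ℝ)..t, Real.exp (Φ z s)) := by ring
  rw [e₁, e₂]
  have final : (2 * Real.exp (-γ₁ - γ₂) - 1) * (∫ s in (0:ℝ)..t, Real.exp (Φ z s))
      ≤ (2 * Real.exp (-γ₁) - Real.exp γ₂) * (∫ s in (0:ℝ)..t, Real.exp (Φ z s)) :=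
    mul_le_mul_of_nonneg_right coeff hInn
  linarith [c₁, c₂, final, expand]
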